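/- arXiv:0708.2583 — 6 statements merged into one kernel-verified Lean document; each statement's English description precedes it below -/
import Mathlib

section
/- Let α ∈ (0,2) and define ℓ(λ) = ((λ+1)^{α/2} − 1)/λ^{α/2} for λ > 0. Then there exist M > 1 and a nonnegative integrable function f on (0,1) such that |log(ℓ(λ²θ²)/ℓ(λ²))| ≤ f(θ) for all θ ∈ (0,1) and λ > M. -/
/-!
Write `a = α/2 ∈ (0,1)` and `c = 1 - 2^(-a)`. Subadditivity of `x ↦ x^a` gives `ℓ ≤ 1`. For
`x ≥ 1`, `(x+1)^a - 1 ≥ (x+1)^a - ((x+1)/2)^a = c (x+1)^a ≥ c x^a`, so `ℓ(x) ≥ c`; for `x ≤ 1`,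
concavity of `x ↦ (x+1)^a - 1` gives `(x+1)^a - 1 ≥ (2^a - 1) x ≥ c x`, so `ℓ(x) ≥ c x^(1-a)`.
Hence both `ℓ(λ²θ²)` and `ℓ(λ²)` lie in `[c θ^(2-α), 1]` once `λ ≥ 1`, and the logarithm of their
ratio is bounded by `-log c - (2-α) log θ`, which is integrable on `(0,1)`.
-/

open Real MeasureTheory

section RpowAddOne

variable {a x : ℝ}

lemma one_sub_two_rpow_neg_nonneg (ha : 0 ≤ a) : 0 ≤ 1 - (2 : ℝ) ^ (-a) :=
  sub_nonneg.2 (rpow_le_one_of_one_le_of_nonpos one_le_two (neg_nonpos.2 ha))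

lemma rpow_add_one_sub_one_div_rpow_le_one (ha0 : 0 ≤ a) (ha1 : a ≤ 1) (hx : 0 < x) :
    ((x + 1) ^ a - 1) / x ^ a ≤ 1 := by
  rw [div_le_one (rpow_pos_of_pos hx a)]
  linarith [rpow_add_le_add_rpow hx.le zero_le_one ha0 ha1, one_rpow a]

lemma one_sub_two_rpow_neg_mul_rpow_le (ha : 0 ≤ a) (hx : 1 ≤ x) :
    (1 - 2 ^ (-a)) * x ^ a ≤ (x + 1) ^ a - 1 := by
  have hhalf : ((x + 1) / 2) ^ a = 2 ^ (-a) * (x + 1) ^ a := by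
    rw [div_rpow (by linarith) zero_le_two, rpow_neg zero_le_two, div_eq_inv_mul]
  have hone : 1 ≤ ((x + 1) / 2) ^ a := one_le_rpow (by linarith) ha
  have hmono : x ^ a ≤ (x + 1) ^ a := rpow_le_rpow (by linarith) (by linarith) ha
  calc (1 - 2 ^ (-a)) * x ^ a ≤ (1 - 2 ^ (-a)) * (x + 1) ^ a :=
        mul_le_mul_of_nonneg_left hmono (one_sub_two_rpow_neg_nonneg ha)
    _ = (x + 1) ^ a - ((x + 1) / 2) ^ a := by rw [hhalf]; ring
    _ ≤ (x + 1) ^ a - 1 := by linarith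

lemma one_sub_two_rpow_neg_mul_le (ha0 : 0 ≤ a) (ha1 : a ≤ 1) (hx0 : 0 ≤ x) (hx1 : x ≤ 1) :
    (1 - 2 ^ (-a)) * x ≤ (x + 1) ^ a - 1 := by
  have hchord : (1 - x) * 1 + x * 2 ^ a ≤ (x + 1) ^ a := by
    have h := (concaveOn_rpow ha0 ha1).2 (Set.mem_Ici.2 zero_le_one) (Set.mem_Ici.2 zero_le_two)
      (sub_nonneg.2 hx1) hx0 (sub_add_cancel 1 x)
    simp only [smul_eq_mul, one_rpow] at h
    rwa [show (1 - x) * 1 + x * 2 = x + 1 by ring] at h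
  have ht : 1 ≤ (2 : ℝ) ^ a := one_le_rpow one_le_two ha0
  have hc : 1 - (2 : ℝ) ^ (-a) ≤ 2 ^ a - 1 := by
    rw [rpow_neg zero_le_two]
    have := inv_le_one_of_one_le₀ ht
    nlinarith [mul_inv_cancel₀ (by positivity : (2 : ℝ) ^ a ≠ 0)]
  nlinarith

lemma one_sub_two_rpow_neg_mul_rpow_le_div {y : ℝ} (ha0 : 0 ≤ a) (ha1 : a ≤ 1)
    (hy0 : 0 < y) (hy1 : y ≤ 1) (hyx : y ≤ x) :
    (1 - 2 ^ (-a)) * y ^ (1 - a) ≤ ((x + 1) ^ a - 1) / x ^ a := by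
  have hx : 0 < x := hy0.trans_le hyx
  have hc := one_sub_two_rpow_neg_nonneg ha0
  rw [le_div_iff₀ (rpow_pos_of_pos hx a)]
  rcases le_total x 1 with hx1 | hx1
  · calc (1 - 2 ^ (-a)) * y ^ (1 - a) * x ^ a
        ≤ (1 - 2 ^ (-a)) * x ^ (1 - a) * x ^ a := by gcongr
      _ = (1 - 2 ^ (-a)) * x := by rw [mul_assoc, ← rpow_add hx, sub_add_cancel, rpow_one]
      _ ≤ (x + 1) ^ a - 1 := one_sub_two_rpow_neg_mul_le ha0 ha1 hx.le hx1
  · have hy : y ^ (1 - a) ≤ 1 := rpow_le_one hy0.le hy1 (sub_nonneg.2 ha1)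
    calc (1 - 2 ^ (-a)) * y ^ (1 - a) * x ^ a ≤ (1 - 2 ^ (-a)) * x ^ a := by
          gcongr; exact mul_le_of_le_one_right hc hy
      _ ≤ (x + 1) ^ a - 1 := one_sub_two_rpow_neg_mul_rpow_le ha0 hx1

end RpowAddOne

lemma abs_log_div_le_neg_log {m u v : ℝ} (hm : 0 < m) (hmu : m ≤ u) (hu : u ≤ 1)
    (hmv : m ≤ v) (hv : v ≤ 1) :
    |log (u / v)| ≤ -log m := by
  rw [log_div (hm.trans_le hmu).ne' (hm.trans_le hmv).ne', abs_le]
  have := log_le_log hm hmu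
  have := log_le_log hm hmv
  have := log_nonpos (hm.trans_le hmu).le hu
  have := log_nonpos (hm.trans_le hmv).le hv
  constructor <;> linarith

theorem stmt_2 (α : ℝ) (hα : α ∈ Set.Ioo (0 : ℝ) 2)
    (ℓ : ℝ → ℝ) (hℓ : ∀ lam > 0, ℓ lam = ((lam + 1) ^ (α / 2) - 1) / lam ^ (α / 2)) :
    ∃ M > (1 : ℝ), ∃ f : ℝ → ℝ,
      (∀ θ ∈ Set.Ioo (0 : ℝ) 1, 0 ≤ f θ) ∧
      MeasureTheory.IntegrableOn f (Set.Ioo (0 : ℝ) 1) ∧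
      ∀ θ ∈ Set.Ioo (0 : ℝ) 1, ∀ lam > M,
        |Real.log (ℓ (lam ^ 2 * θ ^ 2) / ℓ (lam ^ 2))| ≤ f θ := by
  obtain ⟨hα0, hα2⟩ := hα
  have ha0 : 0 ≤ α / 2 := by linarith
  have ha1 : α / 2 ≤ 1 := by linarith
  set c : ℝ := 1 - 2 ^ (-(α / 2))
  have hc0 : 0 < c := sub_pos.2 (rpow_lt_one_of_one_lt_of_neg one_lt_two (by linarith))
  have hc1 : c ≤ 1 := sub_le_self _ (rpow_nonneg zero_le_two _)
  refine ⟨2, one_lt_two, fun θ ↦ -log c - (2 - α) * log θ, ?_, ?_, ?_⟩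
  · intro θ ⟨hθ0, hθ1⟩
    nlinarith [log_nonpos hc0.le hc1, log_nonpos hθ0.le hθ1.le]
  · have hlog : IntegrableOn log (Set.Ioo (0 : ℝ) 1) :=
      (intervalIntegrable_iff_integrableOn_Ioo_of_le zero_le_one).1 intervalIntegral.intervalIntegrable_log'
    exact (integrableOn_const measure_Ioo_lt_top.ne).sub (hlog.const_mul (2 - α))
  · intro θ ⟨hθ0, hθ1⟩ lam hlam
    have hθsq0 : 0 < θ ^ 2 := by positivity
    have hθsq1 : θ ^ 2 ≤ 1 := pow_le_one₀ hθ0.le hθ1.le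
    have hθx : θ ^ 2 ≤ lam ^ 2 * θ ^ 2 := le_mul_of_one_le_left hθsq0.le (by nlinarith)
    have hθlam : θ ^ 2 ≤ lam ^ 2 := hθsq1.trans (by nlinarith)
    have hm : 0 < c * (θ ^ 2) ^ (1 - α / 2) := mul_pos hc0 (rpow_pos_of_pos hθsq0 _)
    have hlog_m : -log (c * (θ ^ 2) ^ (1 - α / 2)) = -log c - (2 - α) * log θ := by
      rw [log_mul hc0.ne' (rpow_pos_of_pos hθsq0 _).ne', log_rpow hθsq0, log_pow]
      push_cast; ring
    rw [hℓ _ (by positivity), hℓ _ (by positivity)]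
    refine (abs_log_div_le_neg_log hm
      (one_sub_two_rpow_neg_mul_rpow_le_div ha0 ha1 hθsq0 hθsq1 hθx)
      (rpow_add_one_sub_one_div_rpow_le_one ha0 ha1 (by positivity))
      (one_sub_two_rpow_neg_mul_rpow_le_div ha0 ha1 hθsq0 hθsq1 hθlam)
      (rpow_add_one_sub_one_div_rpow_le_one ha0 ha1 (by positivity))).trans_eq hlog_m
end

section
/- Let v : (0,∞) → [0,∞) be a decreasing function with V(x) := ∫₀^x v(z) dz finite for every x > 0. Define, for x, y > 0, G(x,y) = ∫₀^x v(z)v(y+z−x) dz if x ≤ y, and G(x,y) = ∫_{x−y}^x v(z)v(y+z−x) dz if x > y. Then for every x, r > 0 with x < r, ∫₀^r G(x,y) dy ≤ 2 V(r) V(x). -/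
/-!
For `x < y` the factor `v (y + z - x)` is at most `v (y - x)`, and for `y < x` the factor `v z`
is at most `v (x - y)`, while the remaining integral is at most `V x`. Hence, off the diagonal,
`G x y ≤ V x * v |x - y|`, and integrating in `y` over `(0, r]` gives
`∫₀^r G(x, y) dy ≤ V x * (V x + V (r - x)) ≤ 2 V r V x`.
-/

open Real MeasureTheory Set

section Translation

variable {f : ℝ → ℝ} {a b : ℝ}

lemma integral_Ioc_comp_sub_right (f : ℝ → ℝ) (hab : a ≤ b) (d : ℝ) :
    ∫ z in Ioc a b, f (z - d) = ∫ z in Ioc (a - d) (b - d), f z := by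
  rw [← intervalIntegral.integral_of_le hab, intervalIntegral.integral_comp_sub_right,
    intervalIntegral.integral_of_le (by linarith)]

lemma integral_Ioc_comp_sub_left (f : ℝ → ℝ) (hab : a ≤ b) (d : ℝ) :
    ∫ z in Ioc a b, f (d - z) = ∫ z in Ioc (d - b) (d - a), f z := by
  rw [← intervalIntegral.integral_of_le hab, intervalIntegral.integral_comp_sub_left,
    intervalIntegral.integral_of_le (by linarith)]

lemma IntegrableOn.comp_sub_right_Ioc (hf : IntegrableOn f (Ioc (a - d) (b - d))) (hab : a ≤ b) :
    IntegrableOn (fun z => f (z - d)) (Ioc a b) := by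
  have h := ((intervalIntegrable_iff_integrableOn_Ioc_of_le (by linarith)).2 hf).comp_sub_right d
  simp only [sub_add_cancel] at h
  exact (intervalIntegrable_iff_integrableOn_Ioc_of_le hab).1 h

lemma IntegrableOn.comp_sub_left_Ioc (hf : IntegrableOn f (Ioc (d - b) (d - a))) (hab : a ≤ b) :
    IntegrableOn (fun z => f (d - z)) (Ioc a b) := by
  have h := ((intervalIntegrable_iff_integrableOn_Ioc_of_le (by linarith)).2 hf).comp_sub_left d
  simp only [sub_sub_cancel] at h
  exact (intervalIntegrable_iff_integrableOn_Ioc_of_le hab).1 h.symm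

end Translation

section Green

variable {v : ℝ → ℝ} {x y : ℝ}

noncomputable def greenKernel (v : ℝ → ℝ) (x y : ℝ) : ℝ :=
  if x ≤ y then ∫ z in Ioc 0 x, v z * v (y + z - x)
  else ∫ z in Ioc (x - y) x, v z * v (y + z - x)

lemma integral_Ioc_zero_mono (hnn : ∀ z > 0, 0 ≤ v z) {a b : ℝ}
    (hint : IntegrableOn v (Ioc 0 b)) (hab : a ≤ b) :
    ∫ z in Ioc 0 a, v z ≤ ∫ z in Ioc 0 b, v z :=
  setIntegral_mono_set hint (ae_restrict_of_forall_mem measurableSet_Ioc fun z hz => hnn z hz.1)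
    (Ioc_subset_Ioc_right hab).eventuallyLE

lemma greenKernel_nonneg (hnn : ∀ z > 0, 0 ≤ v z) (x y : ℝ) : 0 ≤ greenKernel v x y := by
  unfold greenKernel
  split_ifs with hxy
  · exact setIntegral_nonneg measurableSet_Ioc fun z hz =>
      mul_nonneg (hnn z hz.1) (hnn _ (by linarith [hz.1]))
  · exact setIntegral_nonneg measurableSet_Ioc fun z hz =>
      mul_nonneg (hnn z (by linarith [hz.1])) (hnn _ (by linarith [hz.1]))

lemma greenKernel_le_of_lt (hmono : AntitoneOn v (Ioi 0)) (hnn : ∀ z > 0, 0 ≤ v z)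
    (hint : IntegrableOn v (Ioc 0 x)) (hxy : x < y) :
    greenKernel v x y ≤ (∫ z in Ioc 0 x, v z) * v (y - x) := by
  rw [greenKernel, if_pos hxy.le, ← integral_mul_const]
  refine setIntegral_mono_of_nonneg (fun z hz => mul_nonneg (hnn z hz.1) (hnn _ ?_))
    (fun z hz => mul_le_mul_of_nonneg_left ?_ (hnn z hz.1)) (hint.mul_const _)
  · linarith [hz.1]
  · exact hmono (mem_Ioi.2 (by linarith)) (mem_Ioi.2 (by linarith [hz.1])) (by linarith [hz.1])

lemma greenKernel_le_of_gt (hmono : AntitoneOn v (Ioi 0)) (hnn : ∀ z > 0, 0 ≤ v z)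
    (hint : IntegrableOn v (Ioc 0 y)) (hy : 0 < y) (hyx : y < x) :
    greenKernel v x y ≤ v (x - y) * ∫ z in Ioc 0 y, v z := by
  have hshift : ∀ z, y + z - x = z - (x - y) := fun z => by ring
  have hxy : 0 < x - y := by linarith
  rw [greenKernel, if_neg hyx.not_ge]
  simp_rw [hshift]
  calc ∫ z in Ioc (x - y) x, v z * v (z - (x - y))
      ≤ ∫ z in Ioc (x - y) x, v (x - y) * v (z - (x - y)) := by
        refine setIntegral_mono_of_nonneg
          (fun z hz => mul_nonneg (hnn z (hxy.trans hz.1)) (hnn _ (by linarith [hz.1])))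
          (fun z hz => mul_le_mul_of_nonneg_right ?_ (hnn _ (by linarith [hz.1]))) ?_
        · exact hmono hxy (hxy.trans hz.1) hz.1.le
        · refine (IntegrableOn.comp_sub_right_Ioc ?_ (by linarith)).const_mul _
          simpa using hint
    _ = v (x - y) * ∫ z in Ioc 0 y, v z := by
        rw [integral_const_mul, integral_Ioc_comp_sub_right v (by linarith), sub_self,
          sub_sub_cancel]

lemma greenKernel_le (hmono : AntitoneOn v (Ioi 0)) (hnn : ∀ z > 0, 0 ≤ v z)
    (hint : IntegrableOn v (Ioc 0 x)) (hy : 0 < y) (hyx : y ≠ x) :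
    greenKernel v x y ≤ (∫ z in Ioc 0 x, v z) * v |x - y| := by
  rcases hyx.lt_or_gt with hlt | hgt
  · have hVy := integral_Ioc_zero_mono hnn hint hlt.le
    calc greenKernel v x y ≤ v (x - y) * ∫ z in Ioc 0 y, v z :=
          greenKernel_le_of_gt hmono hnn (hint.mono_set (Ioc_subset_Ioc_right hlt.le)) hy hlt
      _ ≤ v (x - y) * ∫ z in Ioc 0 x, v z := mul_le_mul_of_nonneg_left hVy (hnn _ (by linarith))
      _ = (∫ z in Ioc 0 x, v z) * v |x - y| := by rw [abs_of_pos (by linarith), mul_comm]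
  · rw [abs_sub_comm, abs_of_pos (by linarith)]
    exact greenKernel_le_of_lt hmono hnn hint hgt

end Green

section AbsSub

variable {v : ℝ → ℝ} {x r : ℝ}

lemma integrableOn_Ioc_abs_sub (hint : IntegrableOn v (Ioc 0 r)) (hx : 0 ≤ x) (hxr : x ≤ r) :
    IntegrableOn (fun y => v |x - y|) (Ioc 0 r) := by
  rw [← Ioc_union_Ioc_eq_Ioc hx hxr]
  refine IntegrableOn.union ?_ ?_
  · refine (IntegrableOn.comp_sub_left_Ioc (d := x) ?_ hx).congr_fun
      (fun y hy => by rw [abs_of_nonneg (by linarith [hy.2])]) measurableSet_Ioc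
    exact hint.mono_set (by rw [sub_self, sub_zero]; exact Ioc_subset_Ioc_right hxr)
  · refine (IntegrableOn.comp_sub_right_Ioc (d := x) ?_ hxr).congr_fun
      (fun y hy => by rw [abs_sub_comm, abs_of_pos (by linarith [hy.1])]) measurableSet_Ioc
    exact hint.mono_set (by rw [sub_self]; exact Ioc_subset_Ioc_right (by linarith))

lemma integral_Ioc_abs_sub (hint : IntegrableOn v (Ioc 0 r)) (hx : 0 ≤ x) (hxr : x ≤ r) :
    ∫ y in Ioc 0 r, v |x - y| = (∫ z in Ioc 0 x, v z) + ∫ z in Ioc 0 (r - x), v z := by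
  have hi := integrableOn_Ioc_abs_sub hint hx hxr
  rw [← Ioc_union_Ioc_eq_Ioc hx hxr] at hi ⊢
  rw [setIntegral_union (Ioc_disjoint_Ioc_of_le le_rfl) measurableSet_Ioc
    (hi.mono_set subset_union_left) (hi.mono_set subset_union_right)]
  congr 1
  · rw [setIntegral_congr_fun measurableSet_Ioc
      (fun y hy => by rw [abs_of_nonneg (by linarith [hy.2])] : EqOn _ (fun y => v (x - y)) _),
      integral_Ioc_comp_sub_left v hx, sub_self, sub_zero]
  · rw [setIntegral_congr_fun measurableSet_Ioc
      (fun y hy => by rw [abs_sub_comm, abs_of_pos (by linarith [hy.1])] :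
        EqOn _ (fun y => v (y - x)) _),
      integral_Ioc_comp_sub_right v hxr, sub_self]

end AbsSub

theorem stmt_6 (v : ℝ → ℝ)
    (hmono : AntitoneOn v (Set.Ioi 0))
    (hnn : ∀ z > 0, 0 ≤ v z)
    (hint : ∀ x > 0, MeasureTheory.IntegrableOn v (Set.Ioc 0 x))
    (G : ℝ → ℝ → ℝ)
    (hG : ∀ x > 0, ∀ y > 0, G x y =
      if x ≤ y then ∫ z in Set.Ioc 0 x, v z * v (y + z - x)
      else ∫ z in Set.Ioc (x - y) x, v z * v (y + z - x))
    (x r : ℝ) (hx : 0 < x) (hxr : x < r) :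
    (∫ y in Set.Ioc 0 r, G x y) ≤
      2 * (∫ z in Set.Ioc 0 r, v z) * (∫ z in Set.Ioc 0 x, v z) := by
  have hr : 0 < r := hx.trans hxr
  have hVx : 0 ≤ ∫ z in Ioc 0 x, v z :=
    setIntegral_nonneg measurableSet_Ioc fun z hz => hnn z hz.1
  have hVxr := integral_Ioc_zero_mono hnn (hint r hr) hxr.le
  have hVrx := integral_Ioc_zero_mono hnn (hint r hr) (show r - x ≤ r by linarith)
  -- `v 0` is unconstrained, so the pointwise bound can fail on the null set `{x}`
  calc ∫ y in Ioc 0 r, G x y = ∫ y in Ioc 0 r \ {x}, G x y :=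
        (setIntegral_congr_set (sdiff_null_ae_eq_self (measure_singleton x))).symm
    _ ≤ ∫ y in Ioc 0 r \ {x}, (∫ z in Ioc 0 x, v z) * v |x - y| :=
      setIntegral_mono_of_nonneg
        (fun y hy => (hG x hx y hy.1.1).trans_ge (greenKernel_nonneg hnn x y))
        (fun y hy => (hG x hx y hy.1.1).trans_le
          (greenKernel_le hmono hnn (hint x hx) hy.1.1 hy.2))
        (((integrableOn_Ioc_abs_sub (hint r hr) hx.le hxr.le).mono_set sdiff_subset).const_mul _)
    _ = (∫ z in Ioc 0 x, v z) * ((∫ z in Ioc 0 x, v z) + ∫ z in Ioc 0 (r - x), v z) := by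
        rw [setIntegral_congr_set (sdiff_null_ae_eq_self (measure_singleton x)),
          integral_const_mul, integral_Ioc_abs_sub (hint r hr) hx.le hxr.le]
    _ ≤ 2 * (∫ z in Ioc 0 r, v z) * ∫ z in Ioc 0 x, v z := by nlinarith
end

section
/- Let ℓ be a positive measurable function on (0,∞) slowly varying at infinity and let α ∈ (0,2). Then there exist R > 0 and C > 0 such that for all 0 < r ≤ R, ∫_r^∞ (ℓ(s^{−2}))^{1/2} / s^{1+α/2} ds ≤ C (ℓ(r^{−2}))^{1/2} / r^{α/2}. -/
/-!
Write `L s = ℓ (s⁻²) ^ (1/2)`. The increments `h (u + t) - h u` of the measurable function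
`h = log ∘ ℓ ∘ exp` tend to `0` for each `t`, and by the uniform convergence theorem
(Csiszár–Erdős) uniformly for `t ∈ [0, 1]`; this yields Potter's bound
`L s ≤ e^(ε/2) (s/r)^ε L r` for `0 < r ≤ s ≤ R`. With `ε = α/4`, integrating it against
`s^(-1-α/2)` bounds the integral over `(r, R]` by `(4/α) e^(ε/2) L r / r^(α/2)`. The integral over
`(R, ∞)` is a constant, and Potter's bound at `s = R` keeps `L r / r^(α/2)` away from `0` on
`(0, R]`, so this constant is also a multiple of `L r / r^(α/2)`.
-/

open Real MeasureTheory Filter Set Topology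
open scoped ENNReal

lemma tendsto_measure_of_eventually_notMem {α ι : Type*} [MeasurableSpace α] {μ : Measure α}
    {L : Filter ι} [L.IsCountablyGenerated] {S : ι → Set α} {B : Set α}
    (hB : MeasurableSet B) (hBfin : μ B ≠ ⊤) (hS : ∀ i, MeasurableSet (S i))
    (hSB : ∀ i, S i ⊆ B) (hnot : ∀ x, ∀ᶠ i in L, x ∉ S i) :
    Tendsto (fun i => μ (S i)) L (𝓝 0) := by
  simpa using tendsto_measure_of_ae_tendsto_indicator L MeasurableSet.empty hS hB hBfin
    (Eventually.of_forall hSB) (ae_of_all _ fun x => by simpa using hnot x)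

lemma tendsto_volume_setOf_le_abs_sub {h : ℝ → ℝ} (hm : Measurable h)
    (hlim : ∀ t, Tendsto (fun u => h (u + t) - h u) atTop (𝓝 0)) {δ : ℝ} (hδ : 0 < δ)
    {w : ℕ → ℝ} (hw : Tendsto w atTop atTop) :
    Tendsto (fun k => volume {s ∈ Icc (0 : ℝ) 2 | δ ≤ |h (w k + s) - h (w k)|})
      atTop (𝓝 0) := by
  refine tendsto_measure_of_eventually_notMem measurableSet_Icc (by simp)
    (fun k => measurableSet_Icc.inter (measurableSet_le measurable_const
      ((hm.comp (measurable_const_add _)).sub measurable_const).abs))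
    (fun k => sep_subset _ _) fun s => ?_
  filter_upwards [((hlim s).comp hw).eventually (eventually_abs_sub_lt 0 hδ)] with k hk
  simp only [Function.comp_apply, sub_zero] at hk
  exact fun hs => hs.2.not_gt hk

lemma exists_mem_Icc_notMem_of_volume_lt {Y Z : Set ℝ} (hY : volume Y < 1 / 2)
    (hZ : volume Z < 1 / 2) (t : ℝ) : ∃ s ∈ Icc (1 : ℝ) 2, s ∉ Y ∧ s - t ∉ Z := by
  by_contra! hcover
  have hsub : Icc (1 : ℝ) 2 ⊆ Y ∪ (· + -t) ⁻¹' Z := fun s hs => by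
    by_cases hsY : s ∈ Y
    · exact Or.inl hsY
    · exact Or.inr (by simpa [sub_eq_add_neg] using hcover s hs hsY)
  have := (measure_mono hsub).trans (measure_union_le (μ := volume) _ _)
  rw [measure_preimage_add_right, Real.volume_Icc] at this
  have hlt := ENNReal.add_lt_add hY hZ
  rw [ENNReal.add_halves] at hlt
  norm_num at this
  exact (this.trans_lt hlt).false

theorem exists_forall_abs_sub_le_of_tendsto_sub {h : ℝ → ℝ} (hm : Measurable h)
    (hlim : ∀ t, Tendsto (fun u => h (u + t) - h u) atTop (𝓝 0)) {ε : ℝ} (hε : 0 < ε) :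
    ∃ N, ∀ u, N ≤ u → ∀ t ∈ Icc (0 : ℝ) 1, |h (u + t) - h u| ≤ ε := by
  by_contra! hbad
  choose u hu t ht hlarge using hbad
  have hU : Tendsto (fun k : ℕ => u k) atTop atTop :=
    tendsto_atTop_mono (fun k => hu k) tendsto_natCast_atTop_atTop
  have hV : Tendsto (fun k : ℕ => u k + t k) atTop atTop :=
    tendsto_atTop_mono (fun k => le_add_of_nonneg_right (ht k).1) hU
  have hhalf : (0 : ℝ≥0∞) < 1 / 2 := by norm_num
  have hsmall := fun {w : ℕ → ℝ} (hw : Tendsto w atTop atTop) =>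
    (tendsto_volume_setOf_le_abs_sub hm hlim (half_pos hε) hw).eventually_lt_const hhalf
  obtain ⟨k, hUk, hVk⟩ := ((hsmall hU).and (hsmall hV)).exists
  -- some `s ∈ [1, 2]` is good both for `u k` and for `u k + t k`; compare through `u k + s`
  obtain ⟨s, hs, hsU, hsV⟩ := exists_mem_Icc_notMem_of_volume_lt hUk hVk (t k)
  have h₁ : |h (u k + s) - h (u k)| < ε / 2 :=
    not_le.1 fun hle => hsU ⟨⟨by linarith [hs.1], hs.2⟩, hle⟩
  have h₂ : |h (u k + s) - h (u k + t k)| < ε / 2 := by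
    refine not_le.1 fun hle =>
      hsV ⟨⟨by linarith [hs.1, (ht k).2], by linarith [hs.2, (ht k).1]⟩, ?_⟩
    rwa [add_add_sub_cancel]
  have := abs_sub_le (h (u k + t k)) (h (u k + s)) (h (u k))
  rw [abs_sub_comm (h (u k + t k)) (h (u k + s))] at this
  linarith [hlarge k]

lemma abs_sub_le_natCast_mul_of_forall_Icc {h : ℝ → ℝ} {N ε : ℝ}
    (hN : ∀ u, N ≤ u → ∀ t ∈ Icc (0 : ℝ) 1, |h (u + t) - h u| ≤ ε) (n : ℕ) {u t : ℝ}
    (hu : N ≤ u) (ht : t ∈ Icc (0 : ℝ) n) : |h (u + t) - h u| ≤ n * ε := by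
  induction n generalizing t with
  | zero =>
    obtain rfl : t = 0 := le_antisymm (by simpa using ht.2) ht.1
    simp
  | succ n ih =>
    set t' := min t n
    have ht' : t' ∈ Icc (0 : ℝ) n := ⟨le_min ht.1 (Nat.cast_nonneg n), min_le_right _ _⟩
    have hstep : t - t' ∈ Icc (0 : ℝ) 1 := by
      push_cast at ht
      constructor
      · linarith [min_le_left t n]
      · rcases min_choice t n with hmin | hmin <;> simp only [t', hmin] <;> linarith [ht.2]
    have := hN (u + t') (by linarith [ht'.1]) (t - t') hstep
    rw [add_add_sub_cancel] at this
    calc |h (u + t) - h u| ≤ |h (u + t) - h (u + t')| + |h (u + t') - h u| := abs_sub_le _ _ _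
      _ ≤ ε + n * ε := add_le_add this (ih ht')
      _ = (n + 1 : ℕ) * ε := by push_cast; ring

lemma abs_sub_le_mul_sub_add_of_forall_Icc {h : ℝ → ℝ} {N ε : ℝ} (hε : 0 ≤ ε)
    (hN : ∀ u, N ≤ u → ∀ t ∈ Icc (0 : ℝ) 1, |h (u + t) - h u| ≤ ε) {u v : ℝ}
    (hu : N ≤ u) (huv : u ≤ v) : |h v - h u| ≤ ε * (v - u) + ε := by
  have hceil := Nat.ceil_lt_add_one (sub_nonneg.2 huv)
  calc |h v - h u| = |h (u + (v - u)) - h u| := by rw [add_sub_cancel]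
    _ ≤ ⌈v - u⌉₊ * ε :=
      abs_sub_le_natCast_mul_of_forall_Icc hN _ hu ⟨sub_nonneg.2 huv, Nat.le_ceil _⟩
    _ ≤ (v - u + 1) * ε := by gcongr
    _ = ε * (v - u) + ε := by ring

lemma tendsto_log_comp_exp_add_sub {ℓ : ℝ → ℝ} (hpos : ∀ x > 0, 0 < ℓ x)
    (hsv : ∀ lam > 0, Tendsto (fun x => ℓ (lam * x) / ℓ x) atTop (𝓝 1)) (t : ℝ) :
    Tendsto (fun u => log (ℓ (exp (u + t))) - log (ℓ (exp u))) atTop (𝓝 0) := by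
  have := ((continuousAt_log one_ne_zero).tendsto.comp
    ((hsv (exp t) (exp_pos t)).comp tendsto_exp_atTop))
  rw [log_one] at this
  refine this.congr fun u => ?_
  simp only [Function.comp_apply]
  rw [log_div (hpos _ (by positivity)).ne' (hpos _ (exp_pos u)).ne', ← exp_add, add_comm t]

lemma rpow_half_rpow_neg_two_eq_exp {ℓ : ℝ → ℝ} (hpos : ∀ x > 0, 0 < ℓ x) {s : ℝ}
    (hs : 0 < s) :
    ℓ (s ^ (-2 : ℝ)) ^ ((1 : ℝ) / 2) = exp (log (ℓ (exp (-2 * log s))) / 2) := by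
  rw [rpow_def_of_pos hs, rpow_def_of_pos (hpos _ (exp_pos _))]
  ring_nf

lemma exists_rpow_half_rpow_neg_two_le {ℓ : ℝ → ℝ} (hpos : ∀ x > 0, 0 < ℓ x)
    (hmeas : Measurable ℓ) (hsv : ∀ lam > 0, Tendsto (fun x => ℓ (lam * x) / ℓ x) atTop (𝓝 1))
    {ε : ℝ} (hε : 0 < ε) :
    ∃ R > 0, ∀ r s, 0 < r → r ≤ s → s ≤ R →
      ℓ (s ^ (-2 : ℝ)) ^ ((1 : ℝ) / 2) ≤
        exp (ε / 2) * ℓ (r ^ (-2 : ℝ)) ^ ((1 : ℝ) / 2) * (s / r) ^ ε := by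
  set h : ℝ → ℝ := fun u => log (ℓ (exp u))
  obtain ⟨N, hN⟩ := exists_forall_abs_sub_le_of_tendsto_sub (h := h)
    (measurable_log.comp (hmeas.comp measurable_exp)) (tendsto_log_comp_exp_add_sub hpos hsv) hε
  refine ⟨exp (-N / 2), exp_pos _, fun r s hr hrs hsR => ?_⟩
  have hs : 0 < s := hr.trans_le hrs
  have hNs : N ≤ -2 * log s := by
    have := log_le_log hs hsR
    rw [log_exp] at this
    linarith
  have hlog := abs_le.1 (abs_sub_le_mul_sub_add_of_forall_Icc (h := h) hε.le hN hNs
    (by linarith [log_le_log hr hrs] : -2 * log s ≤ -2 * log r))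
  rw [rpow_half_rpow_neg_two_eq_exp hpos hs, rpow_half_rpow_neg_two_eq_exp hpos hr,
    rpow_def_of_pos (div_pos hs hr), log_div hs.ne' hr.ne', ← exp_add, ← exp_add]
  exact exp_le_exp.2 (by linarith [hlog.1])

lemma setIntegral_Ioc_le_of_le_mul_rpow {f : ℝ → ℝ} {r R c ε β : ℝ} (hr : 0 < r) (hc : 0 ≤ c)
    (hεβ : ε < β) (hf : IntegrableOn f (Ioc r R))
    (hle : ∀ s ∈ Ioc r R, f s ≤ c * (s / r) ^ ε / s ^ (1 + β)) :
    ∫ s in Ioc r R, f s ≤ c / ((β - ε) * r ^ β) := by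
  set g : ℝ → ℝ := fun s => c * r ^ (-ε) * s ^ (ε - (1 + β))
  have hg : IntegrableOn g (Ioi r) := (integrableOn_Ioi_rpow_of_lt (by linarith) hr).const_mul _
  have hfg : ∀ s ∈ Ioc r R, f s ≤ g s := fun s hs => by
    have hs0 : 0 < s := hr.trans hs.1
    refine (hle s hs).trans_eq ?_
    simp only [g]
    rw [div_rpow hs0.le hr.le, rpow_neg hr.le, rpow_sub hs0]
    ring
  calc ∫ s in Ioc r R, f s ≤ ∫ s in Ioc r R, g s :=
        setIntegral_mono_on hf (hg.mono_set Ioc_subset_Ioi_self) measurableSet_Ioc hfg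
    _ ≤ ∫ s in Ioi r, g s :=
        setIntegral_mono_set hg ((ae_restrict_iff' measurableSet_Ioi).2 <|
          Eventually.of_forall fun s hs => by have := hr.trans hs; positivity)
          Ioc_subset_Ioi_self.eventuallyLE
    _ = c / ((β - ε) * r ^ β) := by
        rw [integral_const_mul, integral_Ioi_rpow_of_lt (by linarith) hr,
          show ε - (1 + β) + 1 = ε - β by ring, rpow_sub hr, rpow_neg hr.le,
          show ε - β = -(β - ε) by ring]
        have : β - ε ≠ 0 := by linarith
        field_simp

lemma div_rpow_le_div_rpow_of_le_mul_rpow {L : ℝ → ℝ} {r R ε β : ℝ} (hr : 0 < r) (hrR : r ≤ R)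
    (hεβ : ε ≤ β) (hLR : 0 ≤ L R) (hL : L R ≤ exp (ε / 2) * L r * (R / r) ^ ε) :
    exp (-(ε / 2)) * L R / R ^ β ≤ L r / r ^ β := by
  have hR : 0 < R := hr.trans_le hrR
  have hRr : 1 ≤ R / r := (one_le_div hr).2 hrR
  have hpow : (R / r) ^ ε ≤ (R / r) ^ β := rpow_le_rpow_of_exponent_le hRr hεβ
  have hLr : 0 ≤ L r :=
    nonneg_of_mul_nonneg_right (nonneg_of_mul_nonneg_left (hLR.trans hL) (by positivity))
      (exp_pos _)
  have key : L R * r ^ β ≤ exp (ε / 2) * (L r * R ^ β) :=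
    calc L R * r ^ β ≤ exp (ε / 2) * L r * (R / r) ^ β * r ^ β := by
          gcongr; exact hL.trans (by gcongr)
      _ = exp (ε / 2) * (L r * R ^ β) := by rw [div_rpow hR.le hr.le]; field_simp
  rw [exp_neg, div_le_div_iff₀ (by positivity) (by positivity), mul_assoc,
    inv_mul_le_iff₀ (exp_pos _)]
  exact key

theorem stmt_8 (ℓ : ℝ → ℝ) (hpos : ∀ x > 0, 0 < ℓ x) (hmeas : Measurable ℓ)
    (hsv : ∀ lam > 0, Filter.Tendsto (fun x => ℓ (lam * x) / ℓ x) Filter.atTop (nhds 1))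
    (α : ℝ) (hα : α ∈ Set.Ioo (0 : ℝ) 2) :
    ∃ R > (0 : ℝ), ∃ C > (0 : ℝ), ∀ r : ℝ, 0 < r → r ≤ R →
      (∫ s in Set.Ioi r, (ℓ (s ^ (-2 : ℝ))) ^ ((1 : ℝ) / 2) / s ^ (1 + α / 2)) ≤
        C * (ℓ (r ^ (-2 : ℝ))) ^ ((1 : ℝ) / 2) / r ^ (α / 2) := by
  have hα0 : 0 < α := hα.1
  set L : ℝ → ℝ := fun s => ℓ (s ^ (-2 : ℝ)) ^ ((1 : ℝ) / 2)
  have hL : ∀ s > 0, 0 < L s := fun s hs => rpow_pos_of_pos (hpos _ (rpow_pos_of_pos hs _)) _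
  obtain ⟨R, hR, hpotter⟩ :=
    exists_rpow_half_rpow_neg_two_le hpos hmeas hsv (ε := α / 4) (by positivity)
  set A := ∫ s in Ioi R, L s / s ^ (1 + α / 2)
  set m := exp (-(α / 4 / 2)) * L R / R ^ (α / 2)
  have hm : 0 < m := by have := hL R hR; positivity
  refine ⟨R, hR, exp (α / 4 / 2) * (4 / α) + |A| / m, by positivity, fun r hr hrR => ?_⟩
  by_cases hint : IntegrableOn (fun s => L s / s ^ (1 + α / 2)) (Ioi r)
  swap
  · -- the integral of a non-integrable function is `0`
    rw [integral_undef hint]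
    have := hL r hr
    positivity
  have hnear : ∫ s in Ioc r R, L s / s ^ (1 + α / 2) ≤
      exp (α / 4 / 2) * L r / ((α / 2 - α / 4) * r ^ (α / 2)) :=
    setIntegral_Ioc_le_of_le_mul_rpow hr (by have := hL r hr; positivity) (by linarith)
      (hint.mono_set Ioc_subset_Ioi_self) fun s hs =>
        div_le_div_of_nonneg_right (hpotter r s hr hs.1.le hs.2) (rpow_nonneg (hr.trans hs.1).le _)
  have hfar : A ≤ |A| / m * (L r / r ^ (α / 2)) :=
    calc A ≤ |A| / m * m := by rw [div_mul_cancel₀ _ hm.ne']; exact le_abs_self A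
      _ ≤ |A| / m * (L r / r ^ (α / 2)) := by
        gcongr
        exact div_rpow_le_div_rpow_of_le_mul_rpow hr hrR (by linarith) (hL R hR).le
          (hpotter r R hr hrR le_rfl)
  rw [← Ioc_union_Ioi_eq_Ioi hrR, setIntegral_union (Ioc_disjoint_Ioi le_rfl) measurableSet_Ioi
    (hint.mono_set Ioc_subset_Ioi_self) (hint.mono_set (Ioi_subset_Ioi hrR))]
  calc _ ≤ exp (α / 4 / 2) * L r / ((α / 2 - α / 4) * r ^ (α / 2)) +
        |A| / m * (L r / r ^ (α / 2)) := add_le_add hnear hfar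
    _ = (exp (α / 4 / 2) * (4 / α) + |A| / m) * L r / r ^ (α / 2) := by
        field_simp
        ring
end

section
/- Let ℓ be a positive measurable function on (0,∞) slowly varying at infinity and let α ∈ (0,2). Then there exist R > 0 and C > 0 such that for all 0 < r ≤ R, ∫₀^r s^{α−1} / ℓ(s^{−2}) ds ≤ C r^{α} / ℓ(r^{−2}). -/
open Real MeasureTheory Filter
open scoped ENNReal

lemma my_uct (h : ℝ → ℝ) (hm : Measurable h)
    (hlim : ∀ u : ℝ, Tendsto (fun t => h (t + u) - h t) atTop (nhds 0))
    (ε : ℝ) (hε : 0 < ε) :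
    ∃ T : ℝ, ∀ t ≥ T, ∀ u ∈ Set.Icc (0:ℝ) 2, |h (t + u) - h t| ≤ ε := by
  by_contra hcon
  push_neg at hcon
  have H : ∀ n : ℕ, ∃ t, (n:ℝ) ≤ t ∧ ∃ u, u ∈ Set.Icc (0:ℝ) 2 ∧ ε < |h (t + u) - h t| := by
    intro n
    obtain ⟨t, ht, u, hu, hb⟩ := hcon (n:ℝ)
    exact ⟨t, ht, u, hu, hb⟩
  choose t ht u hu hbad using H
  have httop : Tendsto t atTop atTop :=
    tendsto_atTop_mono ht tendsto_natCast_atTop_atTop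
  have htu : Tendsto (fun n => t n + u n) atTop atTop :=
    tendsto_atTop_mono (fun n => le_add_of_nonneg_right (hu n).1) httop
  set f : ℕ → ℝ → ℝ := fun n s => h (t n + s) - h (t n) with hf
  set F : ℕ → ℝ → ℝ := fun n s => h (t n + u n + s) - h (t n + u n) with hF
  have hfm : ∀ n, StronglyMeasurable (f n) := fun n =>
    ((hm.comp (measurable_const.add measurable_id)).sub measurable_const).stronglyMeasurable
  have hFm : ∀ n, StronglyMeasurable (F n) := fun n =>
    ((hm.comp (measurable_const.add measurable_id)).sub measurable_const).stronglyMeasurable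
  have hfp : ∀ s : ℝ, Tendsto (fun n => f n s) atTop (nhds 0) := fun s => (hlim s).comp httop
  have hFp : ∀ s : ℝ, Tendsto (fun n => F n s) atTop (nhds 0) := fun s => (hlim s).comp htu
  obtain ⟨Abad, hAsub, hAm, hAmeas, hAu⟩ :=
    tendstoUniformlyOn_of_ae_tendsto (μ := volume) (s := Set.Icc (0:ℝ) 4) hfm
      stronglyMeasurable_const measurableSet_Icc (by simp)
      (Filter.Eventually.of_forall fun x _ => hfp x) (by norm_num : (0:ℝ) < 1/2)
  obtain ⟨Bbad, hBsub, hBm, hBmeas, hBu⟩ :=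
    tendstoUniformlyOn_of_ae_tendsto (μ := volume) (s := Set.Icc (0:ℝ) 2) hFm
      stronglyMeasurable_const measurableSet_Icc (by simp)
      (Filter.Eventually.of_forall fun x _ => hFp x) (by norm_num : (0:ℝ) < 1/2)
  rw [Metric.tendstoUniformlyOn_iff] at hAu hBu
  obtain ⟨N₁, hN₁⟩ := (hAu (ε/3) (by linarith)).exists_forall_of_atTop
  obtain ⟨N₂, hN₂⟩ := (hBu (ε/3) (by linarith)).exists_forall_of_atTop
  set n := max N₁ N₂ with hn
  have hvex : ∃ v ∈ Set.Icc (0:ℝ) 2, v ∉ Bbad ∧ u n + v ∈ Set.Icc (0:ℝ) 4 \ Abad := by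
    by_contra hemp
    push_neg at hemp
    have hsub : Set.Icc (0:ℝ) 2 ⊆ Bbad ∪ ((fun v => u n + v) ⁻¹' Abad) := by
      intro v hv
      by_cases hvB : v ∈ Bbad
      · exact Or.inl hvB
      · refine Or.inr ?_
        have h4 : u n + v ∈ Set.Icc (0:ℝ) 4 := by
          have := hu n
          exact ⟨by linarith [hv.1, this.1], by linarith [hv.2, this.2]⟩
        have := hemp v hv hvB
        simp only [Set.mem_diff] at this
        by_contra hA
        exact (this ⟨h4, hA⟩).elim
    have hm2 : (volume (Set.Icc (0:ℝ) 2)) ≤ volume Bbad + volume ((fun v => u n + v) ⁻¹' Abad) :=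
      le_trans (measure_mono hsub) (measure_union_le _ _)
    rw [measure_preimage_add] at hm2
    have : (2 : ℝ≥0∞) ≤ 1 := by
      calc (2:ℝ≥0∞) = volume (Set.Icc (0:ℝ) 2) := by simp
      _ ≤ volume Bbad + volume Abad := hm2
      _ ≤ ENNReal.ofReal (1/2) + ENNReal.ofReal (1/2) := add_le_add hBmeas hAmeas
      _ = 1 := by rw [← ENNReal.ofReal_add (by norm_num) (by norm_num)]; norm_num
    norm_num at this
  obtain ⟨v, hv2, hvB, hvA⟩ := hvex
  have h1 : dist ((fun _ : ℝ => (0:ℝ)) (u n + v)) (f n (u n + v)) < ε/3 :=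
    hN₁ n (le_max_left _ _) _ hvA
  have h2 : dist ((fun _ : ℝ => (0:ℝ)) v) (F n v) < ε/3 :=
    hN₂ n (le_max_right _ _) _ ⟨hv2, hvB⟩
  simp only [dist_zero_left, Real.norm_eq_abs] at h1 h2
  have hid : h (t n + u n) - h (t n) = f n (u n + v) - F n v := by
    simp only [hf, hF]
    ring_nf
  have := hbad n
  rw [hid] at this
  have habs : |f n (u n + v) - F n v| ≤ |f n (u n + v)| + |F n v| := abs_sub _ _
  linarith

lemma my_potter (ℓ : ℝ → ℝ) (hpos : ∀ x > 0, 0 < ℓ x) (hmeas : Measurable ℓ)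
    (hsv : ∀ lam > 0, Tendsto (fun x => ℓ (lam * x) / ℓ x) atTop (nhds 1))
    (ε : ℝ) (hε : 0 < ε) :
    ∃ X : ℝ, 1 ≤ X ∧ ∀ x ≥ X, ∀ lam ∈ Set.Icc (1:ℝ) 4, Real.exp (-ε) * ℓ x ≤ ℓ (lam * x) := by
  set h : ℝ → ℝ := fun t => Real.log (ℓ (Real.exp t)) with hh
  have hm : Measurable h := Real.measurable_log.comp (hmeas.comp Real.measurable_exp)
  have hlim : ∀ u : ℝ, Tendsto (fun t => h (t + u) - h t) atTop (nhds 0) := by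
    intro u
    have h1 : Tendsto (fun x => ℓ (Real.exp u * x) / ℓ x) atTop (nhds 1) := hsv _ (Real.exp_pos u)
    have h2 : Tendsto (fun t => ℓ (Real.exp u * Real.exp t) / ℓ (Real.exp t)) atTop (nhds 1) :=
      h1.comp Real.tendsto_exp_atTop
    have h3 := (Real.continuousAt_log one_ne_zero).tendsto.comp h2
    rw [Real.log_one] at h3
    refine h3.congr fun t => ?_
    have e1 : (0:ℝ) < ℓ (Real.exp u * Real.exp t) := hpos _ (by positivity)
    have e2 : (0:ℝ) < ℓ (Real.exp t) := hpos _ (Real.exp_pos t)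
    show Real.log (ℓ (Real.exp u * Real.exp t) / ℓ (Real.exp t)) = h (t + u) - h t
    rw [Real.log_div e1.ne' e2.ne', hh]
    simp only []
    rw [Real.exp_add, mul_comm (Real.exp t) (Real.exp u)]
  obtain ⟨T, hT⟩ := my_uct h hm hlim ε hε
  refine ⟨max 1 (Real.exp T), le_max_left _ _, ?_⟩
  intro x hx lam hlam
  have hx0 : (0:ℝ) < x := lt_of_lt_of_le one_pos (le_trans (le_max_left _ _) hx)
  have hlam0 : (0:ℝ) < lam := lt_of_lt_of_le one_pos hlam.1
  have ht : T ≤ Real.log x := by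
    rw [Real.le_log_iff_exp_le hx0]
    exact le_trans (le_max_right _ _) hx
  have hu : Real.log lam ∈ Set.Icc (0:ℝ) 2 := by
    constructor
    · exact Real.log_nonneg hlam.1
    · have h4 : Real.log lam ≤ Real.log 4 := Real.log_le_log hlam0 hlam.2
      have : Real.log 4 = Real.log 2 + Real.log 2 := by
        rw [← Real.log_mul (by norm_num) (by norm_num)]; norm_num
      have hl2 := Real.log_two_lt_d9
      linarith
  have key := hT (Real.log x) ht (Real.log lam) hu
  have e1 : h (Real.log x + Real.log lam) = Real.log (ℓ (lam * x)) := by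
    rw [hh]
    simp only []
    rw [Real.exp_add, Real.exp_log hx0, Real.exp_log hlam0, mul_comm]
  have e2 : h (Real.log x) = Real.log (ℓ x) := by
    rw [hh]; simp only []; rw [Real.exp_log hx0]
  rw [e1, e2] at key
  have hlx : (0:ℝ) < ℓ x := hpos x hx0
  have hllx : (0:ℝ) < ℓ (lam * x) := hpos _ (by positivity)
  have hk2 : Real.log (ℓ x) + (-ε) ≤ Real.log (ℓ (lam * x)) := by
    have := (abs_le.mp key).1
    linarith
  have := Real.exp_le_exp.mpr hk2
  rwa [Real.exp_add, Real.exp_log hlx, Real.exp_log hllx, mul_comm (ℓ x)] at this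

lemma exists_pow4 (lam : ℝ) (h : 1 ≤ lam) : ∃ n : ℕ, (4:ℝ)^n ≤ lam ∧ lam ≤ 4^(n+1) := by
  have hP : ∃ n : ℕ, lam < 4^(n+1) := by
    obtain ⟨m, hm⟩ := pow_unbounded_of_one_lt lam (by norm_num : (1:ℝ) < 4)
    exact ⟨m, lt_of_lt_of_le hm (pow_le_pow_right₀ (by norm_num) (Nat.le_succ m))⟩
  classical
  set n := Nat.find hP with hn
  have h1 : lam < 4^(n+1) := Nat.find_spec hP
  refine ⟨n, ?_, h1.le⟩
  rcases Nat.eq_zero_or_pos n with h0 | hnpos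
  · rw [h0]; simpa using h
  · have := Nat.find_min hP (m := n - 1) (by omega)
    push_neg at this
    have h2 : lam ≥ 4 ^ (n - 1 + 1) := this
    have he : n - 1 + 1 = n := by omega
    rwa [he] at h2

lemma iter_bound (ℓ : ℝ → ℝ) (X c : ℝ) (hX : 1 ≤ X) (hc : 0 < c)
    (hA : ∀ x ≥ X, ∀ lam ∈ Set.Icc (1:ℝ) 4, c * ℓ x ≤ ℓ (lam * x)) :
    ∀ n : ℕ, ∀ lam : ℝ, (4:ℝ)^n ≤ lam → lam ≤ 4^(n+1) → ∀ x ≥ X, c^(n+1) * ℓ x ≤ ℓ (lam * x) := by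
  intro n
  induction n with
  | zero =>
    intro lam h1 h2 x hx
    have := hA x hx lam ⟨by simpa using h1, by simpa using h2⟩
    simpa using this
  | succ k ih =>
    intro lam h1 h2 x hx
    have hX0 : (0:ℝ) < X := lt_of_lt_of_le one_pos hX
    have hx0 : (0:ℝ) < x := lt_of_lt_of_le hX0 hx
    have h4k : (1:ℝ) ≤ (4:ℝ)^k := one_le_pow₀ (by norm_num)
    have hlam4 : (4:ℝ)^k ≤ lam / 4 := by rw [le_div_iff₀ (by norm_num)]; rw [pow_succ] at h1; linarith
    have hlam4' : lam / 4 ≤ 4^(k+1) := by rw [div_le_iff₀ (by norm_num)]; rw [pow_succ] at h2; linarith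
    have hx' : x ≤ (lam / 4) * x := by nlinarith
    have hkey := ih (lam/4) hlam4 hlam4' x hx
    have hA4 := hA ((lam/4) * x) (le_trans hx hx') 4 ⟨by norm_num, le_refl _⟩
    have heq : 4 * ((lam/4) * x) = lam * x := by ring
    rw [heq] at hA4
    calc c^(k+1+1) * ℓ x = c * (c^(k+1) * ℓ x) := by ring
    _ ≤ c * ℓ ((lam/4) * x) := by nlinarith
    _ ≤ ℓ (lam * x) := hA4

lemma rpow_neg_two_eq (x : ℝ) (hx : 0 < x) : x ^ (-2:ℝ) = (x^2)⁻¹ := by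
  rw [show ((-2:ℝ)) = ((-2 : ℤ):ℝ) by norm_num, Real.rpow_intCast, zpow_neg]
  norm_cast

theorem stmt_10 (ℓ : ℝ → ℝ) (hpos : ∀ x > 0, 0 < ℓ x) (hmeas : Measurable ℓ)
    (hsv : ∀ lam > 0, Filter.Tendsto (fun x => ℓ (lam * x) / ℓ x) Filter.atTop (nhds 1))
    (α : ℝ) (hα : α ∈ Set.Ioo (0 : ℝ) 2) :
    ∃ R > (0 : ℝ), ∃ C > (0 : ℝ), ∀ r : ℝ, 0 < r → r ≤ R →
      (∫ s in Set.Ioc (0 : ℝ) r, s ^ (α - 1) / ℓ (s ^ (-2 : ℝ))) ≤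
        C * r ^ α / ℓ (r ^ (-2 : ℝ)) := by
  obtain ⟨hα0, hα2⟩ := hα
  set ε : ℝ := (α/2) * Real.log 2 with hεdef
  have hε : 0 < ε := by
    have := Real.log_pos (by norm_num : (1:ℝ) < 2)
    positivity
  set c : ℝ := Real.exp (-ε) with hcdef
  have hc : 0 < c := Real.exp_pos _
  obtain ⟨X, hX1, hA⟩ := my_potter ℓ hpos hmeas hsv ε hε
  have hX0 : (0:ℝ) < X := lt_of_lt_of_le one_pos hX1
  refine ⟨(Real.sqrt X)⁻¹, by positivity, Real.exp ε * 2 / α, by positivity, ?_⟩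
  intro r hr hrR
  have hsX : (0:ℝ) < Real.sqrt X := Real.sqrt_pos.mpr hX0
  have hr2eq : r ^ (-2:ℝ) = (r^2)⁻¹ := rpow_neg_two_eq r hr
  have hr2X : X ≤ r ^ (-2:ℝ) := by
    have h1 : r * Real.sqrt X ≤ 1 := by
      calc r * Real.sqrt X ≤ (Real.sqrt X)⁻¹ * Real.sqrt X :=
            mul_le_mul_of_nonneg_right hrR hsX.le
      _ = 1 := inv_mul_cancel₀ hsX.ne'
    have hsq : Real.sqrt X ^ 2 = X := Real.sq_sqrt hX0.le
    have h2 : (r * Real.sqrt X)^2 ≤ 1 := by nlinarith [mul_nonneg hr.le hsX.le]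
    rw [mul_pow, hsq] at h2
    rw [hr2eq, ← one_div, le_div_iff₀ (by positivity : (0:ℝ) < r^2)]
    linarith
  have hr20 : (0:ℝ) < r ^ (-2:ℝ) := by rw [hr2eq]; positivity
  have hlr : 0 < ℓ (r ^ (-2:ℝ)) := hpos _ hr20
  set K : ℝ := Real.exp ε / ℓ (r ^ (-2:ℝ)) * r ^ ((α/2):ℝ) with hKdef
  have hK0 : 0 ≤ K := by positivity
  -- pointwise bound
  have hbound : ∀ s ∈ Set.Ioc (0:ℝ) r,
      s ^ (α - 1) / ℓ (s ^ (-2:ℝ)) ≤ K * s ^ (α/2 - 1) := by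
    intro s hs
    obtain ⟨hs0, hsr⟩ := hs
    have hrs1 : (1:ℝ) ≤ r / s := (one_le_div hs0).mpr hsr
    set lam : ℝ := (r/s)^2 with hlamdef
    have hlam1 : (1:ℝ) ≤ lam := one_le_pow₀ hrs1
    obtain ⟨n, h4n, h4n1⟩ := exists_pow4 lam hlam1
    have key := iter_bound ℓ X c hX1 hc hA n lam h4n h4n1 (r ^ (-2:ℝ)) hr2X
    have heq : lam * r ^ (-2:ℝ) = s ^ (-2:ℝ) := by
      rw [hr2eq, rpow_neg_two_eq s hs0, hlamdef, div_pow]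
      field_simp
    rw [heq] at key
    have hls : 0 < ℓ (s ^ (-2:ℝ)) := hpos _ (by rw [rpow_neg_two_eq s hs0]; positivity)
    have hcn : 0 < c^(n+1) := pow_pos hc _
    have step1 : s ^ (α - 1) / ℓ (s ^ (-2:ℝ)) ≤ s ^ (α - 1) / (c^(n+1) * ℓ (r ^ (-2:ℝ))) :=
      div_le_div_of_nonneg_left (Real.rpow_nonneg hs0.le _) (by positivity) key
    have hc4 : Real.exp ε ^ n = ((4:ℝ)^n) ^ ((α/4) : ℝ) := by
      rw [← Real.rpow_natCast (4:ℝ) n, ← Real.rpow_mul (by norm_num : (0:ℝ) ≤ 4),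
        Real.rpow_def_of_pos (by norm_num : (0:ℝ) < 4), ← Real.exp_nat_mul]
      congr 1
      have h4l : Real.log 4 = 2 * Real.log 2 := by
        rw [show (4:ℝ) = 2^2 by norm_num, Real.log_pow]
        push_cast; ring
      rw [h4l, hεdef]; ring
    have hexp4 : Real.exp ε ^ n ≤ (r/s) ^ ((α/2) : ℝ) := by
      have h1 : ((4:ℝ)^n) ^ ((α/4) : ℝ) ≤ lam ^ ((α/4) : ℝ) :=
        Real.rpow_le_rpow (by positivity) h4n (by positivity)
      have h2 : lam ^ ((α/4) : ℝ) = (r/s) ^ ((α/2) : ℝ) := by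
        rw [hlamdef, ← Real.rpow_natCast (r/s) 2, ← Real.rpow_mul (by positivity)]
        congr 1
        push_cast; ring
      rw [hc4]
      rw [h2] at h1
      exact h1
    have hcinv : (c^(n+1))⁻¹ = Real.exp ε * Real.exp ε ^ n := by
      rw [hcdef, ← Real.exp_nat_mul, ← Real.exp_neg, ← Real.exp_nat_mul, ← Real.exp_add]
      congr 1
      push_cast; ring
    have hrs_rpow : (r/s) ^ ((α/2) : ℝ) = r ^ ((α/2):ℝ) / s ^ ((α/2):ℝ) :=
      Real.div_rpow hr.le hs0.le _
    have hsplit : s ^ (α - 1) = s ^ (α/2 - 1) * s ^ ((α/2):ℝ) := by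
      rw [← Real.rpow_add hs0]
      congr 1
      ring
    have hsa : (0:ℝ) ≤ s ^ (α - 1) := Real.rpow_nonneg hs0.le _
    have hsp : (0:ℝ) < s ^ ((α/2):ℝ) := Real.rpow_pos_of_pos hs0 _
    calc s ^ (α - 1) / ℓ (s ^ (-2:ℝ)) ≤ s ^ (α - 1) / (c^(n+1) * ℓ (r ^ (-2:ℝ))) := step1
    _ = s ^ (α - 1) * (c^(n+1))⁻¹ / ℓ (r ^ (-2:ℝ)) := by
        field_simp
    _ = s ^ (α - 1) * (Real.exp ε * Real.exp ε ^ n) / ℓ (r ^ (-2:ℝ)) := by rw [hcinv]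
    _ ≤ s ^ (α - 1) * (Real.exp ε * (r/s) ^ ((α/2) : ℝ)) / ℓ (r ^ (-2:ℝ)) := by
        gcongr
    _ = K * s ^ (α/2 - 1) := by
        rw [hrs_rpow, hKdef, hsplit]
        field_simp
  -- integrability
  have hintg : IntegrableOn (fun s : ℝ => s ^ (α/2 - 1)) (Set.Ioc 0 r) :=
    (intervalIntegral.intervalIntegrable_rpow' (by linarith : (-1:ℝ) < α/2 - 1)).1
  have hintG : IntegrableOn (fun s : ℝ => K * s ^ (α/2 - 1)) (Set.Ioc 0 r) := hintg.const_mul K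
  have hmf : AEStronglyMeasurable (fun s : ℝ => s ^ (α - 1) / ℓ (s ^ (-2:ℝ)))
      (volume.restrict (Set.Ioc 0 r)) := by
    apply Measurable.aestronglyMeasurable
    fun_prop
  have hfle : ∀ᵐ s ∂(volume.restrict (Set.Ioc (0:ℝ) r)),
      ‖s ^ (α - 1) / ℓ (s ^ (-2:ℝ))‖ ≤ K * s ^ (α/2 - 1) := by
    rw [ae_restrict_iff' measurableSet_Ioc]
    refine Eventually.of_forall fun s hs => ?_
    have hls : 0 < ℓ (s ^ (-2:ℝ)) := hpos _ (by rw [rpow_neg_two_eq s hs.1]; exact inv_pos.mpr (pow_pos hs.1 2))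
    have h0 : 0 ≤ s ^ (α - 1) / ℓ (s ^ (-2:ℝ)) :=
      div_nonneg (Real.rpow_nonneg hs.1.le _) hls.le
    rw [Real.norm_eq_abs, abs_of_nonneg h0]
    exact hbound s hs
  have hintf : IntegrableOn (fun s : ℝ => s ^ (α - 1) / ℓ (s ^ (-2:ℝ))) (Set.Ioc 0 r) :=
    Integrable.mono' hintG hmf hfle
  have hmono : (∫ s in Set.Ioc (0:ℝ) r, s ^ (α - 1) / ℓ (s ^ (-2:ℝ))) ≤
      ∫ s in Set.Ioc (0:ℝ) r, K * s ^ (α/2 - 1) :=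
    setIntegral_mono_on hintf hintG measurableSet_Ioc hbound
  have hIoc : (∫ s in Set.Ioc (0:ℝ) r, K * s ^ (α/2 - 1)) = K * (r ^ ((α/2):ℝ) / (α/2)) := by
    rw [← intervalIntegral.integral_of_le hr.le, intervalIntegral.integral_const_mul,
      integral_rpow (Or.inl (by linarith : (-1:ℝ) < α/2 - 1))]
    have he : α/2 - 1 + 1 = α/2 := by ring
    rw [he, Real.zero_rpow (by linarith : (α/2 : ℝ) ≠ 0)]
    ring
  have hra : r ^ α = r ^ ((α/2):ℝ) * r ^ ((α/2):ℝ) := by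
    rw [← Real.rpow_add hr]
    congr 1
    ring
  calc (∫ s in Set.Ioc (0:ℝ) r, s ^ (α - 1) / ℓ (s ^ (-2:ℝ))) ≤
      ∫ s in Set.Ioc (0:ℝ) r, K * s ^ (α/2 - 1) := hmono
  _ = K * (r ^ ((α/2):ℝ) / (α/2)) := hIoc
  _ = Real.exp ε * 2 / α * r ^ α / ℓ (r ^ (-2:ℝ)) := by
      rw [hKdef, hra]
      field_simp
end

section
/- Suppose μ : (0,∞) → (0,∞) is decreasing and satisfies: (i) μ(t) ≤ C₁ μ(t+1) for all t > 1, and (ii) for each M > 0 there is C₂ > 0 with μ(t) ≤ C₂ μ(2t) for all t ∈ (0,M). Define j(r) = ∫₀^∞ (4πt)^{−d/2} e^{−r²/(4t)} μ(t) dt (assumed finite). Then for every M > 0 there is C₃ > 0 such that j(r) ≤ C₃ j(2r) for all r ∈ (0,M). -/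
/-!
Write `j r = ∫ p(t, r) μ(t) dt` with the heat kernel `p(t, r) = (4πt)^{-d/2} e^{-r²/(4t)}`.
For large times `t ≥ 1` the Gaussian factors of `p(t, r)` and `p(t, 2r)` differ by at most
`e^{r²} ≤ e^{M²}`. For small times `t < 1` use the parabolic scaling `p(4t, 2r) = 4^{-d/2} p(t, r)`:
substituting `t ↦ 4t` in `j (2r)` turns it into `4^{1-d/2} ∫ p(t, r) μ(4t) dt`, and two applications
of the doubling condition near `0` give `μ t ≤ C μ (4t)` there.
-/

open Real MeasureTheory Set

noncomputable def heatKernel (d t r : ℝ) : ℝ :=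
  (4 * π * t) ^ (-d / 2) * exp (-r ^ 2 / (4 * t))

namespace heatKernel

variable (d r : ℝ) {t : ℝ}

lemma nonneg (ht : 0 ≤ t) : 0 ≤ heatKernel d t r :=
  mul_nonneg (rpow_nonneg (by positivity) _) (exp_pos _).le

lemma four_mul_two_mul (ht : 0 ≤ t) :
    heatKernel d (4 * t) (2 * r) = 4 ^ (-d / 2) * heatKernel d t r := by
  have hexp : -(2 * r) ^ 2 / (4 * (4 * t)) = -r ^ 2 / (4 * t) := by
    rw [show -(2 * r) ^ 2 = 4 * -r ^ 2 by ring]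
    exact mul_div_mul_left _ _ four_ne_zero
  rw [heatKernel, heatKernel, show 4 * π * (4 * t) = 4 * (4 * π * t) by ring,
    mul_rpow zero_le_four (by positivity), hexp, mul_assoc]

lemma le_exp_sq_mul_two_mul (ht : 1 ≤ t) :
    heatKernel d t r ≤ exp (r ^ 2) * heatKernel d t (2 * r) := by
  have ht0 : 0 < t := one_pos.trans_le ht
  have hgauss : exp (-r ^ 2 / (4 * t)) ≤ exp (r ^ 2) * exp (-(2 * r) ^ 2 / (4 * t)) := by
    rw [← exp_add, exp_le_exp, div_le_iff₀ (by positivity), add_mul,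
      div_mul_cancel₀ _ (by positivity)]
    nlinarith [sq_nonneg r]
  rw [heatKernel, heatKernel, mul_left_comm]
  exact mul_le_mul_of_nonneg_left hgauss (rpow_nonneg (by positivity) _)

end heatKernel

section Scaling

variable (d r : ℝ) (f : ℝ → ℝ)

lemma eqOn_heatKernel_mul_comp_four_mul :
    EqOn (fun s ↦ heatKernel d s r * f (4 * s))
      (fun s ↦ (4 : ℝ) ^ (d / 2) * (heatKernel d (4 * s) (2 * r) * f (4 * s))) (Ioi 0) := by
  intro s hs
  dsimp only
  rw [heatKernel.four_mul_two_mul d r (le_of_lt hs), ← mul_assoc, ← mul_assoc,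
    ← rpow_add four_pos, neg_div, add_neg_cancel, rpow_zero, one_mul]

lemma integrableOn_heatKernel_mul_comp_four_mul
    (hf : IntegrableOn (fun t ↦ heatKernel d t (2 * r) * f t) (Ioi 0)) :
    IntegrableOn (fun s ↦ heatKernel d s r * f (4 * s)) (Ioi 0) := by
  have hcomp : IntegrableOn (fun s ↦ heatKernel d (4 * s) (2 * r) * f (4 * s)) (Ioi 0) := by
    rw [integrableOn_Ioi_comp_mul_left_iff (fun t ↦ heatKernel d t (2 * r) * f t) 0 four_pos,
      mul_zero]
    exact hf
  exact IntegrableOn.congr_fun (hcomp.const_mul _)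
    (eqOn_heatKernel_mul_comp_four_mul d r f).symm measurableSet_Ioi

lemma setIntegral_heatKernel_mul_comp_four_mul :
    ∫ s in Ioi 0, heatKernel d s r * f (4 * s)
      = 4 ^ (d / 2 - 1) * ∫ t in Ioi 0, heatKernel d t (2 * r) * f t := by
  rw [setIntegral_congr_fun measurableSet_Ioi (eqOn_heatKernel_mul_comp_four_mul d r f),
    integral_const_mul,
    integral_comp_mul_left_Ioi (fun t ↦ heatKernel d t (2 * r) * f t) 0 four_pos, mul_zero,
    smul_eq_mul, rpow_sub four_pos, rpow_one]
  ring

end Scaling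

lemma setIntegral_Ioi_le_of_le_on_Ioo_of_le_on_Ici {f g h : ℝ → ℝ} {a b c : ℝ}
    (hc : 0 < c) (ha : 0 ≤ a) (hb : 0 ≤ b)
    (hf : IntegrableOn f (Ioi 0)) (hg : IntegrableOn g (Ioi 0)) (hh : IntegrableOn h (Ioi 0))
    (hg0 : ∀ t > 0, 0 ≤ g t) (hh0 : ∀ t > 0, 0 ≤ h t)
    (hfg : ∀ t ∈ Ioo 0 c, f t ≤ a * g t) (hfh : ∀ t ∈ Ici c, f t ≤ b * h t) :
    ∫ t in Ioi 0, f t ≤ (a * ∫ t in Ioi 0, g t) + b * ∫ t in Ioi 0, h t := by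
  have hIoo : Ioo 0 c ⊆ Ioi 0 := Ioo_subset_Ioi_self
  have hIci : Ici c ⊆ Ioi 0 := Ici_subset_Ioi.mpr hc
  have hsplit : ∫ t in Ioi 0, f t = (∫ t in Ioo 0 c, f t) + ∫ t in Ici c, f t := by
    rw [← setIntegral_union ((Iio_disjoint_Ici le_rfl).mono_left Ioo_subset_Iio_self)
      measurableSet_Ici (hf.mono_set hIoo) (hf.mono_set hIci), Ioo_union_Ici_eq_Ioi hc]
  have hsmall : ∫ t in Ioo 0 c, f t ≤ a * ∫ t in Ioi 0, g t := calc
    ∫ t in Ioo 0 c, f t ≤ ∫ t in Ioo 0 c, a * g t :=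
      setIntegral_mono_on (hf.mono_set hIoo) ((hg.mono_set hIoo).const_mul a) measurableSet_Ioo hfg
    _ ≤ a * ∫ t in Ioi 0, g t := by
      rw [integral_const_mul]
      exact mul_le_mul_of_nonneg_left (setIntegral_mono_set hg
        ((ae_restrict_mem measurableSet_Ioi).mono hg0) hIoo.eventuallyLE) ha
  have hlarge : ∫ t in Ici c, f t ≤ b * ∫ t in Ioi 0, h t := calc
    ∫ t in Ici c, f t ≤ ∫ t in Ici c, b * h t :=
      setIntegral_mono_on (hf.mono_set hIci) ((hh.mono_set hIci).const_mul b) measurableSet_Ici hfh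
    _ ≤ b * ∫ t in Ioi 0, h t := by
      rw [integral_const_mul]
      exact mul_le_mul_of_nonneg_left (setIntegral_mono_set hh
        ((ae_restrict_mem measurableSet_Ioi).mono hh0) hIci.eventuallyLE) hb
  rw [hsplit]
  exact add_le_add hsmall hlarge

lemma exists_le_mul_comp_four_mul_of_doubling {μ : ℝ → ℝ}
    (hdbl : ∀ M > 0, ∃ C > (0 : ℝ), ∀ t ∈ Ioo (0 : ℝ) M, μ t ≤ C * μ (2 * t))
    {M : ℝ} (hM : 0 < M) : ∃ C > (0 : ℝ), ∀ t ∈ Ioo 0 M, μ t ≤ C * μ (4 * t) := by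
  obtain ⟨C, hC, hμC⟩ := hdbl M hM
  obtain ⟨C', hC', hμC'⟩ := hdbl (2 * M) (by positivity)
  refine ⟨C * C', by positivity, fun t ⟨ht0, htM⟩ ↦ ?_⟩
  calc μ t ≤ C * μ (2 * t) := hμC t ⟨ht0, htM⟩
    _ ≤ C * (C' * μ (2 * (2 * t))) :=
      mul_le_mul_of_nonneg_left (hμC' (2 * t) ⟨by positivity, by linarith⟩) hC.le
    _ = C * C' * μ (4 * t) := by ring_nf

theorem stmt_13_general (d : ℕ) (μ : ℝ → ℝ)
    (hμpos : ∀ t > 0, 0 < μ t)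
    (hdbl2 : ∀ M > 0, ∃ C₂ > (0 : ℝ), ∀ t ∈ Set.Ioo (0 : ℝ) M, μ t ≤ C₂ * μ (2 * t))
    (j : ℝ → ℝ)
    (hj : ∀ r > 0, j r = ∫ t in Set.Ioi (0 : ℝ),
      (4 * Real.pi * t) ^ (-(d : ℝ) / 2) * Real.exp (-r ^ 2 / (4 * t)) * μ t)
    (hfin : ∀ r > 0, MeasureTheory.IntegrableOn
      (fun t => (4 * Real.pi * t) ^ (-(d : ℝ) / 2) * Real.exp (-r ^ 2 / (4 * t)) * μ t)
      (Set.Ioi 0)) :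
    ∀ M > 0, ∃ C₃ > (0 : ℝ), ∀ r ∈ Set.Ioo (0 : ℝ) M, j r ≤ C₃ * j (2 * r) := by
  intro M hM
  obtain ⟨C, hC, hμC⟩ := exists_le_mul_comp_four_mul_of_doubling hdbl2 one_pos
  refine ⟨C * 4 ^ ((d : ℝ) / 2 - 1) + exp (M ^ 2), by positivity, fun r ⟨hr0, hrM⟩ ↦ ?_⟩
  have h2r : 0 < 2 * r := by positivity
  have hint : IntegrableOn (fun t ↦ heatKernel d t (2 * r) * μ t) (Ioi 0) := hfin _ h2r
  have hnonneg : ∀ t > 0, 0 ≤ heatKernel d t (2 * r) * μ t :=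
    fun t ht ↦ mul_nonneg (heatKernel.nonneg _ _ ht.le) (hμpos t ht).le
  have hsmall : ∀ t ∈ Ioo 0 1, heatKernel d t r * μ t ≤ C * (heatKernel d t r * μ (4 * t)) := by
    intro t ht
    rw [mul_left_comm]
    exact mul_le_mul_of_nonneg_left (hμC t ht) (heatKernel.nonneg d r ht.1.le)
  have hlarge : ∀ t ∈ Ici 1,
      heatKernel d t r * μ t ≤ exp (M ^ 2) * (heatKernel d t (2 * r) * μ t) := by
    intro t (ht : 1 ≤ t)
    have ht0 : 0 < t := one_pos.trans_le ht
    calc heatKernel d t r * μ t ≤ exp (r ^ 2) * heatKernel d t (2 * r) * μ t :=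
          mul_le_mul_of_nonneg_right (heatKernel.le_exp_sq_mul_two_mul _ _ ht) (hμpos t ht0).le
      _ ≤ exp (M ^ 2) * (heatKernel d t (2 * r) * μ t) := by
        rw [mul_assoc]
        exact mul_le_mul_of_nonneg_right (exp_le_exp.mpr (pow_le_pow_left₀ hr0.le hrM.le 2))
          (hnonneg t ht0)
  have key := setIntegral_Ioi_le_of_le_on_Ioo_of_le_on_Ici one_pos hC.le (exp_pos _).le
    (hfin r hr0) (integrableOn_heatKernel_mul_comp_four_mul _ _ _ hint) hint
    (fun t ht ↦ mul_nonneg (heatKernel.nonneg _ _ ht.le) (hμpos _ (by positivity)).le)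
    hnonneg hsmall hlarge
  rw [setIntegral_heatKernel_mul_comp_four_mul] at key
  rw [hj r hr0, hj _ h2r, add_mul, mul_assoc]
  exact key

theorem stmt_13 (d : ℕ) (hd : 1 ≤ d) (μ : ℝ → ℝ)
    (hμpos : ∀ t > 0, 0 < μ t) (hμmono : AntitoneOn μ (Set.Ioi 0))
    (C₁ : ℝ) (hC₁ : 0 < C₁) (hdbl1 : ∀ t > 1, μ t ≤ C₁ * μ (t + 1))
    (hdbl2 : ∀ M > 0, ∃ C₂ > (0 : ℝ), ∀ t ∈ Set.Ioo (0 : ℝ) M, μ t ≤ C₂ * μ (2 * t))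
    (j : ℝ → ℝ)
    (hj : ∀ r > 0, j r = ∫ t in Set.Ioi (0 : ℝ),
      (4 * Real.pi * t) ^ (-(d : ℝ) / 2) * Real.exp (-r ^ 2 / (4 * t)) * μ t)
    (hfin : ∀ r > 0, MeasureTheory.IntegrableOn
      (fun t => (4 * Real.pi * t) ^ (-(d : ℝ) / 2) * Real.exp (-r ^ 2 / (4 * t)) * μ t)
      (Set.Ioi 0)) :
    ∀ M > 0, ∃ C₃ > (0 : ℝ), ∀ r ∈ Set.Ioo (0 : ℝ) M, j r ≤ C₃ * j (2 * r) :=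
  stmt_13_general d μ hμpos hdbl2 j hj hfin
end

section
/- Let D ⊂ ℝ^d be open and bounded, and let h : ℝ^d → ℝ be bounded. Let (D_m) be an increasing sequence of open sets with closure(D_m) ⊂ D_{m+1} and ∪D_m = D, and suppose a strong Markov process X with exit times τ_m := τ_{D_m} ↑ τ_D satisfies h(x) = E_x[h(X_{τ_m}); τ_m < τ_D] for all m and x ∈ D, X_{τ_m} → X_{τ_D} a.s., P_x(X_{τ_D} ∈ N) = 0 for a set N ⊂ ∂D, and lim_{D∋x→z} h(x) = 0 for every z ∈ ∂D \ N. Then h ≡ 0 on D. -/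
open MeasureTheory Filter Set Topology

/- The hypotheses say that `h x = E_x[h(Y_m); A_m]` for every `m`, where on `A_m` the point `Y_m`
lies in `D` and converges a.s. to a point `Z` of `∂D \ N`. Hence the integrands tend to `0` a.s.:
off `A_m` they vanish, and on `A_m` they are values of `h` at points of `D` close to `Z`, where `h`
is small. They are bounded, so by dominated convergence the constant `h x` equals their limit `0`. -/

theorem Filter.Tendsto.indicator_comp_of_mapsTo {ι X M : Type*} [TopologicalSpace X] [Zero M]
    [TopologicalSpace M] {l : Filter ι} {f : X → M} {D : Set X} {z : X}
    (hf : Tendsto f (𝓝[D] z) (𝓝 0)) {u : ι → X} (hu : Tendsto u l (𝓝 z)) {s : Set ι}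
    (hs : MapsTo u s D) : Tendsto (s.indicator (f ∘ u)) l (𝓝 0) := by
  classical
  refine Tendsto.piecewise (hf.comp ?_) (tendsto_inf_right tendsto_const_nhds)
  exact tendsto_nhdsWithin_iff.2
    ⟨tendsto_inf_left hu, mem_inf_of_right (mem_principal.2 hs)⟩

theorem MeasureTheory.eq_zero_of_forall_eq_integral_of_tendsto_zero {Ω E : Type*}
    [MeasurableSpace Ω] [NormedAddCommGroup E] [NormedSpace ℝ E] {μ : Measure Ω}
    [IsFiniteMeasure μ] {g : ℕ → Ω → E} {C : ℝ} {c : E} (hc : ∀ m, c = ∫ ω, g m ω ∂μ)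
    (hbound : ∀ m, ∀ᵐ ω ∂μ, ‖g m ω‖ ≤ C)
    (hlim : ∀ᵐ ω ∂μ, Tendsto (fun m => g m ω) atTop (𝓝 0)) : c = 0 := by
  by_cases hmeas : ∀ m, AEStronglyMeasurable (g m) μ
  · have hint : Tendsto (fun m => ∫ ω, g m ω ∂μ) atTop (𝓝 0) := by
      simpa using tendsto_integral_of_dominated_convergence (fun _ => C) hmeas
        (integrable_const C) hbound hlim
    simp only [← hc] at hint
    exact tendsto_nhds_unique tendsto_const_nhds hint
  · -- a non-measurable integrand has Bochner integral `0` by convention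
    obtain ⟨m, hm⟩ := not_forall.1 hmeas
    rw [hc m, integral_non_aestronglyMeasurable hm]

theorem stmt_18_general (d : ℕ) (D : Set (EuclideanSpace ℝ (Fin d)))
    (h : EuclideanSpace ℝ (Fin d) → ℝ) (Cb : ℝ) (hbdd : ∀ x, |h x| ≤ Cb)
    (Ω : Type*) [MeasurableSpace Ω]
    (P : EuclideanSpace ℝ (Fin d) → Measure Ω) [∀ x, IsProbabilityMeasure (P x)]
    (Y : ℕ → Ω → EuclideanSpace ℝ (Fin d)) (Z : Ω → EuclideanSpace ℝ (Fin d))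
    (A : ℕ → Set Ω) (hAmeas : ∀ m, MeasurableSet (A m))
    (N : Set (EuclideanSpace ℝ (Fin d)))
    (hrep : ∀ m : ℕ, ∀ x ∈ D, h x = ∫ ω in A m, h (Y m ω) ∂ P x)
    (hYD : ∀ m : ℕ, ∀ x ∈ D, ∀ᵐ ω ∂ P x, ω ∈ A m → Y m ω ∈ D)
    (hconv : ∀ x ∈ D, ∀ᵐ ω ∂ P x,
      Filter.Tendsto (fun m => Y m ω) Filter.atTop (nhds (Z ω)))
    (hZbd : ∀ x ∈ D, ∀ᵐ ω ∂ P x, Z ω ∈ frontier D)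
    (hN : ∀ x ∈ D, P x (Z ⁻¹' N) = 0)
    (hlim : ∀ z ∈ frontier D \ N, Filter.Tendsto h (nhdsWithin z D) (nhds 0)) :
    ∀ x ∈ D, h x = 0 := by
  intro x hx
  refine eq_zero_of_forall_eq_integral_of_tendsto_zero (μ := P x) (C := Cb)
    (g := fun m => (A m).indicator fun ω => h (Y m ω)) (fun m => ?_) (fun m => ?_) ?_
  · rw [hrep m x hx, integral_indicator (hAmeas m)]
  · exact .of_forall fun ω => (norm_indicator_le_norm_self _ _).trans (hbdd _)
  · filter_upwards [ae_all_iff.2 fun m => hYD m x hx, hconv x hx, hZbd x hx,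
      measure_eq_zero_iff_ae_notMem.1 (hN x hx)] with ω hYω hYZ hZ hZN
    exact (hlim (Z ω) ⟨hZ, hZN⟩).indicator_comp_of_mapsTo (s := {m | ω ∈ A m}) hYZ hYω

theorem stmt_18 (d : ℕ) (D : Set (EuclideanSpace ℝ (Fin d)))
    (hDopen : IsOpen D) (hDbdd : Bornology.IsBounded D)
    (h : EuclideanSpace ℝ (Fin d) → ℝ) (Cb : ℝ) (hbdd : ∀ x, |h x| ≤ Cb)
    (Ω : Type*) [MeasurableSpace Ω]
    (P : EuclideanSpace ℝ (Fin d) → Measure Ω) [∀ x, IsProbabilityMeasure (P x)]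
    (Y : ℕ → Ω → EuclideanSpace ℝ (Fin d)) (Z : Ω → EuclideanSpace ℝ (Fin d))
    (A : ℕ → Set Ω) (hA : Antitone A) (hAmeas : ∀ m, MeasurableSet (A m))
    (N : Set (EuclideanSpace ℝ (Fin d)))
    (hrep : ∀ m : ℕ, ∀ x ∈ D, h x = ∫ ω in A m, h (Y m ω) ∂ P x)
    (hYD : ∀ m : ℕ, ∀ x ∈ D, ∀ᵐ ω ∂ P x, ω ∈ A m → Y m ω ∈ D)
    (hconv : ∀ x ∈ D, ∀ᵐ ω ∂ P x,
      Filter.Tendsto (fun m => Y m ω) Filter.atTop (nhds (Z ω)))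
    (hZbd : ∀ x ∈ D, ∀ᵐ ω ∂ P x, Z ω ∈ frontier D)
    (hN : ∀ x ∈ D, P x (Z ⁻¹' N) = 0)
    (hlim : ∀ z ∈ frontier D \ N, Filter.Tendsto h (nhdsWithin z D) (nhds 0)) :
    ∀ x ∈ D, h x = 0 :=
  stmt_18_general d D h Cb hbdd Ω P Y Z A hAmeas N hrep hYD hconv hZbd hN hlim
end
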